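/- arXiv:math/0607106 — 3 statements merged into one kernel-verified Lean document; each statement's English description precedes it below -/
import Mathlib

section
/- Barbilian's Fundamental Theorem: Let K be a nonempty compact topological space, J a set, and f : K × J → ℝ a positive influence continuous in the first variable. Define d(A,B) = log(M(A,B)/m(A,B)) where M and m are the max and min over P ∈ K of f(P,A)/f(P,B). Then d is a weak distance on J: d(A,A) = 0, d(A,B) ≥ 0, d(A,B) = d(B,A), and d satisfies the triangle inequality d(A,C) ≤ d(A,B) + d(B,C). -/
theorem barbilian_fundamental {K : Type*} [TopologicalSpace K] [CompactSpace K] [Nonempty K]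
    {J : Type*} (f : K → J → ℝ)
    (hpos : ∀ P A, 0 < f P A)
    (hcont : ∀ A, Continuous fun P => f P A)
    (M m : J → J → ℝ)
    (hM : ∀ A B, IsGreatest (Set.range fun P => f P A / f P B) (M A B))
    (hm : ∀ A B, IsLeast (Set.range fun P => f P A / f P B) (m A B))
    (d : J → J → ℝ) (hd : ∀ A B, d A B = Real.log (M A B / m A B)) :
    (∀ A, d A A = 0) ∧ (∀ A B, 0 ≤ d A B) ∧ (∀ A B, d A B = d B A) ∧
      (∀ A B C, d A C ≤ d A B + d B C) := by
  have hMub : ∀ A B (P : K), f P A / f P B ≤ M A B := fun A B P => (hM A B).2 ⟨P, rfl⟩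
  have hmlb : ∀ A B (P : K), m A B ≤ f P A / f P B := fun A B P => (hm A B).2 ⟨P, rfl⟩
  have hMex : ∀ A B, ∃ P : K, f P A / f P B = M A B := by
    intro A B; obtain ⟨P, hP⟩ := (hM A B).1; exact ⟨P, hP⟩
  have hmex : ∀ A B, ∃ P : K, f P A / f P B = m A B := by
    intro A B; obtain ⟨P, hP⟩ := (hm A B).1; exact ⟨P, hP⟩
  have hmpos : ∀ A B, 0 < m A B := by
    intro A B
    obtain ⟨P, hP⟩ := hmex A B
    rw [← hP]
    exact div_pos (hpos P A) (hpos P B)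
  have hMpos : ∀ A B, 0 < M A B := by
    intro A B
    obtain ⟨P, hP⟩ := hMex A B
    rw [← hP]
    exact div_pos (hpos P A) (hpos P B)
  have hle : ∀ A B, m A B ≤ M A B := by
    intro A B
    obtain ⟨P, hP⟩ := hMex A B
    calc m A B ≤ f P A / f P B := hmlb A B P
    _ = M A B := hP
  have hinv : ∀ A B, M A B = 1 / m B A := by
    intro A B
    apply le_antisymm
    · obtain ⟨P, hP⟩ := hMex A B
      rw [← hP]
      calc f P A / f P B = 1 / (f P B / f P A) := by
            rw [one_div, inv_div]
        _ ≤ 1 / m B A := one_div_le_one_div_of_le (hmpos B A) (hmlb B A P)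
    · obtain ⟨P, hP⟩ := hmex B A
      rw [← hP]
      calc 1 / (f P B / f P A) = f P A / f P B := by rw [one_div, inv_div]
        _ ≤ M A B := hMub A B P
  refine ⟨?_, ?_, ?_, ?_⟩
  · intro A
    obtain ⟨P, hP⟩ := hMex A A
    obtain ⟨Q, hQ⟩ := hmex A A
    have hM1 : M A A = 1 := by rw [← hP, div_self (hpos P A).ne']
    have hm1 : m A A = 1 := by rw [← hQ, div_self (hpos Q A).ne']
    rw [hd, hM1, hm1]
    simp
  · intro A B
    rw [hd]
    apply Real.log_nonneg
    rw [le_div_iff₀ (hmpos A B), one_mul]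
    exact hle A B
  · intro A B
    have h2 : m A B = 1 / M B A := by
      rw [hinv B A]
      rw [one_div_one_div]
    rw [hd, hd, hinv A B, h2]
    congr 1
    rw [div_div_div_comm, div_self (one_ne_zero), one_div_div]
  · intro A B C
    have hMul : M A C ≤ M A B * M B C := by
      obtain ⟨P, hP⟩ := hMex A C
      rw [← hP]
      have e : f P A / f P C = (f P A / f P B) * (f P B / f P C) := by
        rw [div_mul_div_comm, mul_comm (f P B) (f P C),
          mul_div_mul_right _ _ (hpos P B).ne']
      rw [e]
      exact mul_le_mul (hMub A B P) (hMub B C P)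
        (le_of_lt (div_pos (hpos P B) (hpos P C))) (le_of_lt (hMpos A B))
    have hmul : m A B * m B C ≤ m A C := by
      obtain ⟨P, hP⟩ := hmex A C
      rw [← hP]
      have e : f P A / f P C = (f P A / f P B) * (f P B / f P C) := by
        rw [div_mul_div_comm, mul_comm (f P B) (f P C),
          mul_div_mul_right _ _ (hpos P B).ne']
      rw [e]
      exact mul_le_mul (hmlb A B P) (hmlb B C P)
        (le_of_lt (hmpos B C)) (le_of_lt (div_pos (hpos P A) (hpos P B)))
    rw [hd, hd, hd]
    rw [Real.log_div (hMpos A C).ne' (hmpos A C).ne',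
        Real.log_div (hMpos A B).ne' (hmpos A B).ne',
        Real.log_div (hMpos B C).ne' (hmpos B C).ne']
    have l1 : Real.log (M A C) ≤ Real.log (M A B) + Real.log (M B C) := by
      rw [← Real.log_mul (hMpos A B).ne' (hMpos B C).ne']
      exact Real.log_le_log (hMpos A C) hMul
    have l2 : Real.log (m A B) + Real.log (m B C) ≤ Real.log (m A C) := by
      rw [← Real.log_mul (hmpos A B).ne' (hmpos B C).ne']
      exact Real.log_le_log (mul_pos (hmpos A B) (hmpos B C)) hmul
    linarith
end

section
/- If the influence f additionally satisfies the nondegeneracy condition that the ratio P ↦ f(P,A)/f(P,B) is constant on K only when A = B, then the Barbilian oscillation d(A,B) = log(M(A,B)/m(A,B)) is a genuine metric on J: d(A,B) = 0 implies A = B. -/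
theorem barbilian_nondegenerate {K : Type*} [TopologicalSpace K] [CompactSpace K] [Nonempty K]
    {J : Type*} (f : K → J → ℝ)
    (hpos : ∀ P A, 0 < f P A)
    (hcont : ∀ A, Continuous fun P => f P A)
    (hnd : ∀ A B : J, (∃ c : ℝ, ∀ P : K, f P A / f P B = c) → A = B)
    (M m : J → J → ℝ)
    (hM : ∀ A B, IsGreatest (Set.range fun P => f P A / f P B) (M A B))
    (hm : ∀ A B, IsLeast (Set.range fun P => f P A / f P B) (m A B)) :
    ∀ A B : J, Real.log (M A B / m A B) = 0 → A = B := by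
  intro A B hlog
  obtain ⟨⟨P₀, hP₀⟩, hmlb⟩ := hm A B
  obtain ⟨⟨P₁, hP₁⟩, hMub⟩ := hM A B
  have hmpos : 0 < m A B := hP₀ ▸ div_pos (hpos P₀ A) (hpos P₀ B)
  have hMpos : 0 < M A B := lt_of_lt_of_le hmpos (hmlb ⟨P₁, hP₁⟩)
  have hratio : M A B / m A B = 1 := by
    rcases Real.log_eq_zero.mp hlog with h | h | h
    · exact absurd h (ne_of_gt (div_pos hMpos hmpos))
    · exact h
    · linarith [div_pos hMpos hmpos]
  have heq : M A B = m A B := by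
    field_simp at hratio; linarith
  apply hnd A B
  refine ⟨m A B, fun P => le_antisymm ?_ (hmlb ⟨P, rfl⟩)⟩
  calc f P A / f P B ≤ M A B := hMub ⟨P, rfl⟩
    _ = m A B := heq
end

section
/- Let K ⊆ ℝⁿ be a nonempty compact set and J ⊆ ℝⁿ with J ∩ K = ∅, and assume that for all distinct A, B ∈ J the function P ↦ dist(P,A)/dist(P,B) is not constant on K. Then d(A,B) = log( max_{P∈K} dist(P,A)/dist(P,B) · max_{Q∈K} dist(Q,B)/dist(Q,A) ) defines a metric on J. -/
theorem kelly_metric (n : ℕ) (K J : Set (EuclideanSpace ℝ (Fin n)))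
    (hKne : K.Nonempty) (hKc : IsCompact K) (hdisj : J ∩ K = ∅)
    (hnd : ∀ A ∈ J, ∀ B ∈ J, A ≠ B → ¬ ∃ c : ℝ, ∀ P ∈ K, dist P A / dist P B = c)
    (d : EuclideanSpace ℝ (Fin n) → EuclideanSpace ℝ (Fin n) → ℝ)
    (hd : ∀ A B, d A B = Real.log
      (sSup ((fun P => dist P A / dist P B) '' K) *
       sSup ((fun Q => dist Q B / dist Q A) '' K))) :
    (∀ A ∈ J, ∀ B ∈ J, (d A B = 0 ↔ A = B)) ∧
    (∀ A ∈ J, ∀ B ∈ J, 0 ≤ d A B) ∧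
    (∀ A ∈ J, ∀ B ∈ J, d A B = d B A) ∧
    (∀ A ∈ J, ∀ B ∈ J, ∀ C ∈ J, d A C ≤ d A B + d B C) := by
  have hpos : ∀ A ∈ J, ∀ P ∈ K, 0 < dist P A := by
    intro A hA P hP
    have hne : P ≠ A := by
      rintro rfl
      have : P ∈ J ∩ K := ⟨hA, hP⟩
      simp [hdisj] at this
    exact dist_pos.mpr hne
  set S : EuclideanSpace ℝ (Fin n) → EuclideanSpace ℝ (Fin n) → ℝ :=
    fun A B => sSup ((fun P => dist P A / dist P B) '' K) with hSdef
  have hcont : ∀ B ∈ J, ∀ A, ContinuousOn (fun P => dist P A / dist P B) K := by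
    intro B hB A
    exact ((Continuous.dist continuous_id continuous_const).continuousOn).div
      ((Continuous.dist continuous_id continuous_const).continuousOn)
      (fun P hP => (hpos B hB P hP).ne')
  have hbdd : ∀ A, ∀ B ∈ J, BddAbove ((fun P => dist P A / dist P B) '' K) :=
    fun A B hB => hKc.bddAbove_image (hcont B hB A)
  have hle : ∀ A, ∀ B ∈ J, ∀ P ∈ K, dist P A / dist P B ≤ S A B :=
    fun A B hB P hP => le_csSup (hbdd A B hB) ⟨P, hP, rfl⟩
  have hmax : ∀ A, ∀ B ∈ J, ∃ P ∈ K, S A B = dist P A / dist P B := by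
    intro A B hB
    obtain ⟨P, hP, hPmax⟩ := hKc.exists_isMaxOn hKne (hcont B hB A)
    refine ⟨P, hP, le_antisymm (csSup_le (hKne.image _) ?_) (hle A B hB P hP)⟩
    rintro x ⟨Q, hQ, rfl⟩
    exact hPmax hQ
  have hSpos : ∀ A ∈ J, ∀ B ∈ J, 0 < S A B := by
    intro A hA B hB
    obtain ⟨P, hP, hPeq⟩ := hmax A B hB
    rw [hPeq]
    exact div_pos (hpos A hA P hP) (hpos B hB P hP)
  have hone : ∀ A ∈ J, ∀ B ∈ J, 1 ≤ S A B * S B A := by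
    intro A hA B hB
    obtain ⟨P, hP, hPeq⟩ := hmax A B hB
    have h1 : dist P B / dist P A ≤ S B A := hle B A hA P hP
    have hfpos : 0 < dist P A / dist P B := div_pos (hpos A hA P hP) (hpos B hB P hP)
    have hb := (hpos B hB P hP).ne'
    have ha := (hpos A hA P hP).ne'
    calc (1:ℝ) = (dist P A / dist P B) * (dist P B / dist P A) := by
          field_simp
      _ ≤ S A B * S B A := by
          rw [hPeq]
          exact mul_le_mul_of_nonneg_left h1 (le_of_lt (hPeq ▸ hfpos))
  have hstrict : ∀ A ∈ J, ∀ B ∈ J, A ≠ B → 1 < S A B * S B A := by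
    intro A hA B hB hAB
    obtain ⟨P1, hP1, hP1ne⟩ : ∃ P ∈ K, dist P A / dist P B ≠ S A B := by
      by_contra h
      push_neg at h
      exact hnd A hA B hB hAB ⟨S A B, h⟩
    have hP1lt : dist P1 A / dist P1 B < S A B :=
      lt_of_le_of_ne (hle A B hB P1 hP1) hP1ne
    have hfpos : 0 < dist P1 A / dist P1 B := div_pos (hpos A hA P1 hP1) (hpos B hB P1 hP1)
    have h1 : dist P1 B / dist P1 A ≤ S B A := hle B A hA P1 hP1
    have hinv : (S A B)⁻¹ < dist P1 B / dist P1 A := by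
      rw [show dist P1 B / dist P1 A = (dist P1 A / dist P1 B)⁻¹ from (inv_div _ _).symm]
      exact inv_strictAnti₀ hfpos hP1lt
    calc (1:ℝ) = S A B * (S A B)⁻¹ := (mul_inv_cancel₀ (hSpos A hA B hB).ne').symm
      _ < S A B * S B A := by
          apply mul_lt_mul_of_pos_left _ (hSpos A hA B hB)
          exact lt_of_lt_of_le hinv h1
  have hsub : ∀ A ∈ J, ∀ B ∈ J, ∀ C ∈ J, S A C ≤ S A B * S B C := by
    intro A hA B hB C hC
    apply csSup_le (hKne.image _)
    rintro x ⟨P, hP, rfl⟩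
    have hb := (hpos B hB P hP).ne'
    have hc := (hpos C hC P hP).ne'
    have heq : dist P A / dist P C = (dist P A / dist P B) * (dist P B / dist P C) := by
      field_simp
    show dist P A / dist P C ≤ S A B * S B C
    rw [heq]
    exact mul_le_mul (hle A B hB P hP) (hle B C hC P hP)
      (div_nonneg dist_nonneg dist_nonneg) (hSpos A hA B hB).le
  refine ⟨?_, ?_, ?_, ?_⟩
  · intro A hA B hB
    constructor
    · intro h0
      by_contra hne
      have := Real.log_pos (hstrict A hA B hB hne)
      rw [hd A B] at h0
      rw [h0] at this
      exact lt_irrefl 0 this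
    · rintro rfl
      rw [hd A A]
      have himg : (fun P => dist P A / dist P A) '' K = {1} := by
        apply Set.eq_singleton_iff_nonempty_unique_mem.mpr
        refine ⟨hKne.image _, ?_⟩
        rintro x ⟨P, hP, rfl⟩
        exact div_self (hpos A hA P hP).ne'
      simp [hSdef] at himg ⊢
      rw [himg]
      simp
  · intro A hA B hB
    rw [hd A B]
    exact Real.log_nonneg (hone A hA B hB)
  · intro A hA B hB
    rw [hd A B, hd B A, mul_comm]
  · intro A hA B hB C hC
    rw [hd A C, hd A B, hd B C]
    have p1 := hSpos A hA B hB
    have p2 := hSpos B hB A hA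
    have p3 := hSpos B hB C hC
    have p4 := hSpos C hC B hB
    have p5 := hSpos A hA C hC
    have p6 := hSpos C hC A hA
    rw [← Real.log_mul (by positivity : (S A B * S B A : ℝ) ≠ 0) (by positivity : (S B C * S C B : ℝ) ≠ 0)]
    · apply Real.log_le_log (by positivity)
      calc S A C * S C A ≤ (S A B * S B C) * (S C B * S B A) :=
            mul_le_mul (hsub A hA B hB C hC) (hsub C hC B hB A hA)
              (hSpos C hC A hA).le (by positivity)
        _ = S A B * S B A * (S B C * S C B) := by ring
end
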